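/- In the setting of a (P2+P3, complement-of-(P2+P3))-free graph G with induced 5-cycle C on v1,...,v5, for every i in {1,...,5} every vertex of V_{1,2,3,4,5} is adjacent to every vertex of V_{i,i+2}. -/

import Mathlib

/-- `G` contains no induced subgraph isomorphic to `H`. -/
def InducedFree {α V : Type*} (G : SimpleGraph V) (H : SimpleGraph α) : Prop :=
  ∀ f : α ↪ V, ¬ (∀ a b : α, H.Adj a b ↔ G.Adj (f a) (f b))

/-- `P₂ + P₃`: the disjoint union of a 2-vertex path and a 3-vertex path. -/
def P2PlusP3 : SimpleGraph (Fin 5) :=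
  SimpleGraph.fromRel fun a b => (a = 0 ∧ b = 1) ∨ (a = 2 ∧ b = 3) ∨ (a = 3 ∧ b = 4)

/-- `VS G v S`: the vertices outside the 5-cycle `v 0, …, v 4` whose
neighbourhood on the cycle is exactly `{v i : i ∈ S}`. -/
def VS {V : Type*} (G : SimpleGraph V) (v : ZMod 5 → V) (S : Set (ZMod 5)) : Set V :=
  {x | (∀ i, x ≠ v i) ∧ ∀ i, G.Adj x (v i) ↔ i ∈ S}

theorem InducedFree.false_of_P2PlusP3 {V : Type*} {H : SimpleGraph V}
    (hH : InducedFree H P2PlusP3) {a b c d e : V} (hinj : Function.Injective ![a, b, c, d, e])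
    (hab : H.Adj a b) (hcd : H.Adj c d) (hde : H.Adj d e) (hce : ¬ H.Adj c e)
    (hsep : ∀ u ∈ ({a, b} : Set V), ∀ w ∈ ({c, d, e} : Set V), ¬ H.Adj u w) : False := by
  simp only [Set.mem_insert_iff, Set.mem_singleton_iff, forall_eq_or_imp, forall_eq] at hsep
  obtain ⟨⟨hac, had, hae⟩, hbc, hbd, hbe⟩ := hsep
  refine hH ⟨_, hinj⟩ fun p q => ?_
  fin_cases p <;> fin_cases q <;>
    simp [P2PlusP3, H.adj_comm, *]

section FiveCycle

variable {V : Type*} {G : SimpleGraph V} {v : ZMod 5 → V}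

theorem adj_of_mem_VS_univ {x : V} (hx : x ∈ VS G v Set.univ) (j : ZMod 5) : G.Adj x (v j) :=
  (hx.2 j).2 trivial

theorem not_adj_succ_of_mem_VS_pair {i : ZMod 5} {y : V} (hy : y ∈ VS G v {i, i + 2}) :
    ¬ G.Adj y (v (i + 1)) := by
  simp only [hy.2, Set.mem_insert_iff, add_eq_left, Set.mem_singleton_iff, add_right_inj, not_or]
  decide

theorem injective_cycle_path (hv : Function.Injective v) {x y : V} (hx : ∀ j, x ≠ v j)
    (hy : ∀ j, y ≠ v j) (hxy : x ≠ y) (i : ZMod 5) :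
    Function.Injective ![v i, v (i + 2), x, y, v (i + 1)] := by
  have hvC {j k : ZMod 5} (h : j ≠ k) : v (i + j) ≠ v (i + k) := fun e => h (by simpa using hv e)
  have h02 : v i ≠ v (i + 2) := by simpa using hvC (j := 0) (k := 2) (by decide)
  have h01 : v i ≠ v (i + 1) := by simpa using hvC (j := 0) (k := 1) (by decide)
  have h21 := hvC (j := 2) (k := 1) (by decide)
  intro p q h
  fin_cases p <;> fin_cases q <;> simp_all [(hx _).symm, (hy _).symm, Ne.symm]

end FiveCycle

theorem stmt_15_general {V : Type*} (G : SimpleGraph V)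
    (hGc : InducedFree Gᶜ P2PlusP3)
    (v : ZMod 5 → V) (hv : Function.Injective v)
    (hC : ∀ i j : ZMod 5, G.Adj (v i) (v j) ↔ j = i + 1 ∨ j = i - 1) :
    ∀ i : ZMod 5, ∀ x ∈ VS G v (Set.univ : Set (ZMod 5)), ∀ y ∈ VS G v {i, i + 2},
      G.Adj x y := by
  intro i x hx y hy
  by_contra hxy
  have hx_adj := adj_of_mem_VS_univ hx
  have hy_nadj := not_adj_succ_of_mem_VS_pair hy
  have hxy_ne : x ≠ y := fun h => hy_nadj (h ▸ hx_adj _)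
  have h02 : v i ≠ v (i + 2) := hv.ne (by simp only [ne_eq, left_eq_add]; decide)
  -- In the complement, `v i v (i+2)` is an edge and `x y v (i+1)` an induced path.
  refine hGc.false_of_P2PlusP3 (injective_cycle_path hv hx.1 hy.1 hxy_ne i) ?_ ⟨hxy_ne, hxy⟩
    ⟨hy.1 _, hy_nadj⟩ (by simp [hx_adj]) ?_
  · simp only [SimpleGraph.compl_adj, ne_eq, h02, not_false_eq_true, hC, add_right_inj,
      sub_eq_add_neg, not_or, true_and]
    decide
  · have h01 : G.Adj (v i) (v (i + 1)) := (hC _ _).2 (.inl rfl)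
    have h21 : G.Adj (v (i + 2)) (v (i + 1)) := (hC _ _).2 (.inr (by ring))
    simp [SimpleGraph.compl_adj, G.adj_comm _ x, G.adj_comm _ y, hx_adj, hy.2, h01, h21]

/-- For each `i`, every vertex of `V_{1,2,3,4,5}` is adjacent to every
vertex of `V_{i,i+2}`. -/
theorem stmt_15 {V : Type*} [Fintype V] (G : SimpleGraph V)
    (hG : InducedFree G P2PlusP3) (hGc : InducedFree Gᶜ P2PlusP3)
    (v : ZMod 5 → V) (hv : Function.Injective v)
    (hC : ∀ i j : ZMod 5, G.Adj (v i) (v j) ↔ j = i + 1 ∨ j = i - 1) :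
    ∀ i : ZMod 5, ∀ x ∈ VS G v (Set.univ : Set (ZMod 5)), ∀ y ∈ VS G v {i, i + 2},
      G.Adj x y :=
  stmt_15_general G hGc v hv hC
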